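/- Under the gaps-and-weight setup, assume that G_j is nonempty for every j = 1, …, n. Then there exists a unique n-tuple (p_1, …, p_n) of real polynomials, each of degree at most n − 1, such that I_j(p_k) = δ_{jk} for all j, k = 1, …, n. Equivalently, there exists a unique basis ω̃_1, …, ω̃_n of holomorphic differentials ω̃_k = p_k(λ)dλ/w normalized by ∫_{α̃_j} ω̃_k = δ_{jk} over the curves α̃_j determined by the divisor trajectories. -/

import Mathlib

open Finset

/-- The weight `w(t) = √(−∏_{i=0}^{2n}(t − bᵢ))` on the gaps of the hyperelliptic curve. -/
noncomputable def gapWeight (n : ℕ) (b : Fin (2 * n + 1) → ℝ) (t : ℝ) : ℝ :=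
  Real.sqrt (-∏ i, (t - b i))

/-- The signed integral `I_j(f) = ε_j · Σ_{(c,d) ∈ G_j} ∫_c^d f(t)/w(t) dt` over the pieces
of the collection of paths `G_j` lying in gap `j`. -/
noncomputable def gapIntegral (n : ℕ) (b : Fin (2 * n + 1) → ℝ) (ε : Fin n → ℝ)
    (G : Fin n → List (ℝ × ℝ)) (j : Fin n) (f : ℝ → ℝ) : ℝ :=
  ε j * ((G j).map fun pr => ∫ t in pr.1..pr.2, f t / gapWeight n b t).sum

/-!
The map `p ↦ (I_j(p))_j` is linear on polynomials of degree `< n`: near the ends of a gap `w`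
vanishes like `√((t - b_{2j-1})(b_{2j} - t))`, so `p / w` is integrable there. It is injective: a
polynomial without a root in gap `j` keeps a strict sign on it, so `p / w` has a nonzero integral
over each of the nonempty pieces in `G_j`, all of the same sign, and `I_j(p) ≠ 0`. Hence
`I(p) = 0` forces a root in each of the `n` disjoint gaps, so `p = 0`. By counting dimensions the
map is a bijection onto `ℝⁿ`, and `p_k` is the preimage of the `k`-th unit vector.
-/

open MeasureTheory Polynomial

theorem IsPreconnected.forall_pos_or_forall_neg {α : Type*} [TopologicalSpace α] {s : Set α}
    {f : α → ℝ} (hs : IsPreconnected s) (hf : ContinuousOn f s) (h0 : ∀ x ∈ s, f x ≠ 0) :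
    (∀ x ∈ s, 0 < f x) ∨ ∀ x ∈ s, f x < 0 := by
  by_contra! h
  obtain ⟨⟨x, hx, hfx⟩, y, hy, hfy⟩ := h
  obtain ⟨z, hz, hfz⟩ := hs.intermediate_value hx hy hf ⟨hfx, hfy⟩
  exact h0 z hz hfz

theorem Finset.prod_sub_pos_of_even_card {ι : Type*} {s : Finset ι} {x : ι → ℝ} {t : ℝ}
    (hne : ∀ i ∈ s, x i ≠ t) (heven : Even #{i ∈ s | t < x i}) :
    0 < ∏ i ∈ s, (t - x i) := by
  rw [← prod_filter_mul_prod_filter_not s (fun i => t < x i)]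
  refine mul_pos ?_ (prod_pos fun i hi => ?_)
  · have hneg : ∏ i ∈ s with t < x i, (t - x i) = ∏ i ∈ s with t < x i, -(x i - t) := by
      simp only [neg_sub]
    rw [hneg, prod_neg, heven.neg_one_pow, one_mul]
    exact prod_pos fun i hi => sub_pos.2 (mem_filter.1 hi).2
  · obtain ⟨his, hti⟩ := mem_filter.1 hi
    exact sub_pos.2 (lt_of_le_of_ne (not_lt.1 hti) (hne i his))

theorem intervalIntegrable_inv_sqrt_mul_sub {a b : ℝ} (hab : a < b) :
    IntervalIntegrable (fun t => (√((t - a) * (b - t)))⁻¹) volume a b := by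
  -- `x = c t - d` maps `[a, b]` onto `[-1, 1]` and turns the weight into `c (1 - x²)^(-1/2)`.
  set c := 2 / (b - a) with hc
  set d := (a + b) / (b - a) with hd
  have hba : b - a ≠ 0 := (sub_pos.2 hab).ne'
  have hc0 : 0 < c := div_pos two_pos (sub_pos.2 hab)
  have hchange : ∀ t, (√((t - a) * (b - t)))⁻¹ = c * √(1 - (c * t - d) ^ 2)⁻¹ := by
    intro t
    have hsq : 1 - (c * t - d) ^ 2 = c ^ 2 * ((t - a) * (b - t)) := by
      rw [hc, hd]; field_simp; ring
    rw [hsq, Real.sqrt_inv, Real.sqrt_mul (sq_nonneg c), Real.sqrt_sq hc0.le, mul_inv,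
      ← mul_assoc, mul_inv_cancel₀ hc0.ne', one_mul]
  have hcheb := (Chebyshev.intervalIntegrable_sqrt_one_sub_sq_inv.comp_sub_right d).comp_mul_left
    (c := c)
  simp_rw [hchange]
  refine IntervalIntegrable.const_mul ?_ c
  convert hcheb using 1 <;> (rw [hc, hd]; field_simp; ring)

theorem Polynomial.mem_degreeLT_iff_natDegree_le_pred {R : Type*} [Semiring R] {n : ℕ}
    (hn : 0 < n) {p : R[X]} : p ∈ degreeLT R n ↔ p.natDegree ≤ n - 1 := by
  obtain ⟨m, rfl⟩ := Nat.exists_eq_add_one_of_ne_zero hn.ne'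
  rw [degreeLT_succ_eq_degreeLE, mem_degreeLE, natDegree_le_iff_degree_le, Nat.add_sub_cancel]

theorem LinearMap.existsUnique_mem_of_bijective_domRestrict {R M N : Type*} [Semiring R]
    [AddCommMonoid M] [AddCommMonoid N] [Module R M] [Module R N] {f : M →ₗ[R] N}
    {V : Submodule R M} (hf : Function.Bijective (f.domRestrict V)) (y : N) :
    ∃! x ∈ V, f x = y := by
  obtain ⟨⟨x, hx⟩, rfl⟩ := hf.2 y
  exact ⟨x, ⟨hx, rfl⟩, fun x' ⟨hx', hfx'⟩ => congrArg Subtype.val (hf.1 (a₁ := ⟨x', hx'⟩) hfx')⟩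

theorem existsUnique_pi_of_forall_existsUnique {ι α : Type*} {r : ι → α → Prop}
    (h : ∀ i, ∃! a, r i a) : ∃! f : ι → α, ∀ i, r i (f i) := by
  choose f hf hf_unique using h
  exact ⟨f, hf, fun g hg => funext fun i => hf_unique i (g i) (hg i)⟩

namespace Gap

variable {n : ℕ}

-- `j : Fin n` is the paper's gap `j + 1`, the interval `(b_{2j+1}, b_{2j+2})`.
def left (j : Fin n) : Fin (2 * n + 1) := ⟨2 * j + 1, by grind⟩

def right (j : Fin n) : Fin (2 * n + 1) := ⟨2 * j + 2, by grind⟩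

theorem left_lt_right (j : Fin n) : left j < right j := by
  simp [left, right, Fin.lt_def]

theorem right_le_left_of_lt {j k : Fin n} (h : j < k) : right j ≤ left k := by
  simp only [left, right, Fin.le_def, Fin.lt_def] at h ⊢
  omega

theorem lt_left_or_right_lt {j : Fin n} {i : Fin (2 * n + 1)}
    (hi : i ∉ ({left j, right j} : Finset _)) :
    i < left j ∨ right j < i := by
  simp only [Finset.mem_insert, Finset.mem_singleton, Fin.ext_iff, left, right] at hi
  simp only [left, right, Fin.lt_def]
  omega

variable (b : Fin (2 * n + 1) → ℝ)

def cofactor (j : Fin n) (t : ℝ) : ℝ :=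
  ∏ i ∈ ({left j, right j}ᶜ : Finset _), (t - b i)

theorem neg_prod_sub_eq_mul_cofactor (j : Fin n) (t : ℝ) :
    -∏ i, (t - b i) = (t - b (left j)) * (b (right j) - t) * cofactor b j t := by
  rw [← prod_compl_mul_prod {left j, right j}, prod_pair (left_lt_right j).ne, cofactor]
  ring

variable {b}

theorem cofactor_pos (hb : StrictMono b) (j : Fin n) {t : ℝ}
    (ht : t ∈ Set.Icc (b (left j)) (b (right j))) : 0 < cofactor b j t := by
  have hlt : ∀ i, i < left j → b i < t := fun i hi => (hb hi).trans_le ht.1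
  have hgt : ∀ i, right j < i → t < b i := fun i hi => ht.2.trans_lt (hb hi)
  -- exactly the `2 (n - 1 - j)` factors indexed above the gap are negative
  have habove : {i ∈ ({left j, right j}ᶜ : Finset _) | t < b i} = Finset.Ioi (right j) := by
    ext i
    simp only [Finset.mem_filter, Finset.mem_compl, Finset.mem_Ioi]
    constructor
    · rintro ⟨hi, hti⟩
      exact (lt_left_or_right_lt hi).resolve_left fun h => (hlt i h).not_gt hti
    · intro hi
      refine ⟨?_, hgt i hi⟩
      simp only [Finset.mem_insert, Finset.mem_singleton, not_or]
      exact ⟨((left_lt_right j).trans hi).ne', hi.ne'⟩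
  refine prod_sub_pos_of_even_card (fun i hi => ?_) ?_
  · rcases lt_left_or_right_lt (Finset.mem_compl.1 hi) with h | h
    exacts [(hlt i h).ne, (hgt i h).ne']
  · rw [habove, Fin.card_Ioi, Nat.even_iff]
    simp only [right]
    omega

theorem gapWeight_eq_sqrt_mul (j : Fin n) {t : ℝ}
    (ht : t ∈ Set.Icc (b (left j)) (b (right j))) :
    gapWeight n b t = √((t - b (left j)) * (b (right j) - t)) * √(cofactor b j t) := by
  rw [gapWeight, neg_prod_sub_eq_mul_cofactor b j, Real.sqrt_mul]
  exact mul_nonneg (sub_nonneg.2 ht.1) (sub_nonneg.2 ht.2)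

theorem gapWeight_pos (hb : StrictMono b) (j : Fin n) {t : ℝ}
    (ht : t ∈ Set.Ioo (b (left j)) (b (right j))) : 0 < gapWeight n b t := by
  rw [gapWeight, neg_prod_sub_eq_mul_cofactor b j]
  exact Real.sqrt_pos.2 (mul_pos (mul_pos (sub_pos.2 ht.1) (sub_pos.2 ht.2))
    (cofactor_pos hb j (Set.Ioo_subset_Icc_self ht)))

theorem intervalIntegrable_div_gapWeight (hb : StrictMono b) (j : Fin n) {f : ℝ → ℝ}
    (hf : ContinuousOn f (Set.Icc (b (left j)) (b (right j)))) {c d : ℝ}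
    (hc : c ∈ Set.Icc (b (left j)) (b (right j))) (hd : d ∈ Set.Icc (b (left j)) (b (right j))) :
    IntervalIntegrable (fun t => f t / gapWeight n b t) volume c d := by
  have hgap := hb (left_lt_right j)
  have hcont : ContinuousOn (fun t => f t * (√(cofactor b j t))⁻¹)
      (Set.uIcc (b (left j)) (b (right j))) := by
    rw [Set.uIcc_of_lt hgap]
    refine hf.mul (ContinuousOn.inv₀ (by fun_prop [cofactor]) fun t ht => ?_)
    exact (Real.sqrt_pos.2 (cofactor_pos hb j ht)).ne'
  refine (((intervalIntegrable_inv_sqrt_mul_sub hgap).mul_continuousOn hcont).congr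
    fun t ht => ?_).mono_set ?_
  · rw [gapWeight_eq_sqrt_mul j (Set.uIcc_of_lt hgap ▸ Set.uIoc_subset_uIcc ht), div_eq_mul_inv,
      mul_inv]
    ring
  · rw [Set.uIcc_of_lt hgap]
    exact Set.uIcc_subset_Icc hc hd

variable (b) in
def IsSubinterval (j : Fin n) (pr : ℝ × ℝ) : Prop :=
  b (left j) ≤ pr.1 ∧ pr.1 < pr.2 ∧ pr.2 ≤ b (right j)

theorem IsSubinterval.fst_mem {j : Fin n} {pr : ℝ × ℝ} (h : IsSubinterval b j pr) :
    pr.1 ∈ Set.Icc (b (left j)) (b (right j)) :=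
  ⟨h.1, h.2.1.le.trans h.2.2⟩

theorem IsSubinterval.snd_mem {j : Fin n} {pr : ℝ × ℝ} (h : IsSubinterval b j pr) :
    pr.2 ∈ Set.Icc (b (left j)) (b (right j)) :=
  ⟨h.1.trans h.2.1.le, h.2.2⟩

variable {ε : Fin n → ℝ} {G : Fin n → List (ℝ × ℝ)}

theorem gapIntegral_add {j : Fin n} {f g : ℝ → ℝ}
    (hf : ∀ pr ∈ G j, IntervalIntegrable (fun t => f t / gapWeight n b t) volume pr.1 pr.2)
    (hg : ∀ pr ∈ G j, IntervalIntegrable (fun t => g t / gapWeight n b t) volume pr.1 pr.2) :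
    gapIntegral n b ε G j (fun t => f t + g t) =
      gapIntegral n b ε G j f + gapIntegral n b ε G j g := by
  rw [gapIntegral, gapIntegral, gapIntegral, ← mul_add, ← List.sum_map_add]
  congr 2
  refine List.map_congr_left fun pr hpr => ?_
  simp only [add_div]
  exact intervalIntegral.integral_add (hf pr hpr) (hg pr hpr)

theorem gapIntegral_const_mul (j : Fin n) (c : ℝ) (f : ℝ → ℝ) :
    gapIntegral n b ε G j (fun t => c * f t) = c * gapIntegral n b ε G j f := by
  simp only [gapIntegral, mul_div_assoc, intervalIntegral.integral_const_mul,
    List.sum_map_mul_left]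
  ring

theorem gapIntegral_neg (j : Fin n) (f : ℝ → ℝ) :
    gapIntegral n b ε G j (fun t => -f t) = -gapIntegral n b ε G j f := by
  simpa using gapIntegral_const_mul (b := b) (ε := ε) (G := G) j (-1) f

theorem gapIntegral_ne_zero_of_pos (hb : StrictMono b) {j : Fin n} (hε : ε j ≠ 0)
    (hG : ∀ pr ∈ G j, IsSubinterval b j pr) (hGne : G j ≠ [])
    {f : ℝ → ℝ} (hf : ContinuousOn f (Set.Icc (b (left j)) (b (right j))))
    (hpos : ∀ t ∈ Set.Ioo (b (left j)) (b (right j)), 0 < f t) :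
    gapIntegral n b ε G j f ≠ 0 := by
  refine mul_ne_zero hε (List.sum_pos _ ?_ (by simpa using hGne)).ne'
  simp only [List.mem_map]
  rintro _ ⟨pr, hpr, rfl⟩
  obtain ⟨hleft, hlt, hright⟩ := hG pr hpr
  refine intervalIntegral.intervalIntegral_pos_of_pos_on (intervalIntegrable_div_gapWeight hb j hf
    (hG pr hpr).fst_mem (hG pr hpr).snd_mem) (fun t ht => ?_) hlt
  have ht' : t ∈ Set.Ioo (b (left j)) (b (right j)) :=
    ⟨hleft.trans_lt ht.1, ht.2.trans_le hright⟩
  exact div_pos (hpos t ht') (gapWeight_pos hb j ht')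

theorem exists_eq_zero_of_gapIntegral_eq_zero (hb : StrictMono b) {j : Fin n} (hε : ε j ≠ 0)
    (hG : ∀ pr ∈ G j, IsSubinterval b j pr) (hGne : G j ≠ [])
    {f : ℝ → ℝ} (hf : ContinuousOn f (Set.Icc (b (left j)) (b (right j))))
    (h : gapIntegral n b ε G j f = 0) : ∃ t ∈ Set.Ioo (b (left j)) (b (right j)), f t = 0 := by
  by_contra! hne
  rcases isPreconnected_Ioo.forall_pos_or_forall_neg (hf.mono Set.Ioo_subset_Icc_self) hne
    with hpos | hneg
  · exact gapIntegral_ne_zero_of_pos hb hε hG hGne hf hpos h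
  · refine gapIntegral_ne_zero_of_pos (f := fun t => -f t) hb hε hG hGne hf.neg
      (fun t ht => neg_pos.2 (hneg t ht)) ?_
    rw [gapIntegral_neg, h, neg_zero]

variable (ε G) in
noncomputable def periodMap (hb : StrictMono b)
    (hG : ∀ j, ∀ pr ∈ G j, IsSubinterval b j pr) :
    ℝ[X] →ₗ[ℝ] (Fin n → ℝ) where
  toFun p j := gapIntegral n b ε G j fun t => p.eval t
  map_add' p q := funext fun j => by
    have hint : ∀ r : ℝ[X], ∀ pr ∈ G j,
        IntervalIntegrable (fun t => r.eval t / gapWeight n b t) volume pr.1 pr.2 :=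
      fun r pr hpr => intervalIntegrable_div_gapWeight hb j r.continuous.continuousOn
        (hG j pr hpr).fst_mem (hG j pr hpr).snd_mem
    simp only [eval_add, Pi.add_apply]
    exact gapIntegral_add (hint p) (hint q)
  map_smul' c p := funext fun j => by
    simp only [eval_smul, smul_eq_mul, RingHom.id_apply, Pi.smul_apply]
    exact gapIntegral_const_mul j c _

theorem eq_zero_of_gapIntegral_eq_zero (hb : StrictMono b) (hε : ∀ j, ε j ≠ 0)
    (hG : ∀ j, ∀ pr ∈ G j, IsSubinterval b j pr)
    (hGne : ∀ j, G j ≠ []) {p : ℝ[X]} (hp : p ∈ degreeLT ℝ n)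
    (h : ∀ j, gapIntegral n b ε G j (fun t => p.eval t) = 0) : p = 0 := by
  choose x hx hpx using fun j => exists_eq_zero_of_gapIntegral_eq_zero hb (hε j) (hG j) (hGne j)
    p.continuous.continuousOn (h j)
  have hx_mono : StrictMono x := fun j k hjk =>
    (hx j).2.trans ((hb.monotone (right_le_left_of_lt hjk)).trans_lt (hx k).1)
  by_contra hp0
  refine hp0 (eq_zero_of_natDegree_lt_card_of_eval_eq_zero p hx_mono.injective hpx ?_)
  simpa using (natDegree_lt_iff_degree_lt hp0).2 (mem_degreeLT.1 hp)

end Gap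

/-- Real-integral form of the paper's Proposition: if every `G_j` is nonempty, there is a
unique tuple of polynomials `p₁, …, pₙ` of degree at most `n − 1` (i.e. a unique basis
`ω̃_k = p_k(λ)dλ/w` of holomorphic differentials) normalized by `I_j(p_k) = δ_{jk}`. -/
theorem unique_normalized_basis (n : ℕ)
    (b : Fin (2 * n + 1) → ℝ) (hb : StrictMono b)
    (ε : Fin n → ℝ) (hε : ∀ j, ε j = 1 ∨ ε j = -1)
    (G : Fin n → List (ℝ × ℝ))
    (hG : ∀ j : Fin n, ∀ pr ∈ G j,
      b ⟨2 * (j : ℕ) + 1, by omega⟩ ≤ pr.1 ∧ pr.1 < pr.2 ∧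
        pr.2 ≤ b ⟨2 * (j : ℕ) + 2, by omega⟩)
    (hGne : ∀ j : Fin n, G j ≠ []) :
    ∃! P : Fin n → Polynomial ℝ,
      (∀ k, (P k).natDegree ≤ n - 1) ∧
      ∀ j k : Fin n, gapIntegral n b ε G j (fun t => (P k).eval t) =
        if j = k then 1 else 0 := by
  have hε' : ∀ j, ε j ≠ 0 := fun j => by rcases hε j with h | h <;> simp [h]
  set φ := (Gap.periodMap ε G hb hG).domRestrict (degreeLT ℝ n)
  have hinj : Function.Injective φ := (injective_iff_map_eq_zero φ).2 fun p hp =>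
    Subtype.ext (Gap.eq_zero_of_gapIntegral_eq_zero hb hε' hG hGne p.2 (congrFun hp))
  have hbij : Function.Bijective φ := ⟨hinj,
    (LinearMap.injective_iff_surjective_of_finrank_eq_finrank
      (degreeLTEquiv ℝ n).finrank_eq).1 hinj⟩
  have hcolumn (k : Fin n) : ∃! p : ℝ[X], p.natDegree ≤ n - 1 ∧
      ∀ j, gapIntegral n b ε G j (fun t => p.eval t) = if j = k then 1 else 0 := by
    simpa [← mem_degreeLT_iff_natDegree_le_pred k.pos, funext_iff, Pi.single_apply, Gap.periodMap]
      using LinearMap.existsUnique_mem_of_bijective_domRestrict hbij (Pi.single k 1)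
  obtain ⟨P, hP, hP_unique⟩ := existsUnique_pi_of_forall_existsUnique hcolumn
  exact ⟨P, ⟨fun k => (hP k).1, fun j k => (hP k).2 j⟩,
    fun Q hQ => hP_unique Q fun k => ⟨hQ.1 k, fun j => hQ.2 j k⟩⟩
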